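/- (Proposition 2, logarithmic form) Fix μ > 0, a = b = 7/2, and a positive integer K. Then lim_{T→∞} (log P_b(K, T+1) − log P_b(K, T)) = log λ, where λ = μ/(μ + b); that is, for large fronthaul capacity the user blocking probability decreases exponentially in T, and the exponent per unit of equivalent capacity T/K is K·log λ. -/
import Mathlib


open scoped BigOperators

/-- The distribution of the number of users in the coverage of a cluster of `K` RRUs:
`P_K(n) = b^{Ka} μ^n Γ(n + Ka) / ((μ + b)^{Ka+n} Γ(Ka) n!)` with `a = b = 7/2`. -/
noncomputable def Puser (μ : ℝ) (K : ℕ) (n : ℕ) : ℝ :=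
  (7/2 : ℝ) ^ ((K : ℝ) * (7/2)) * μ ^ n * Real.Gamma ((n : ℝ) + (K : ℝ) * (7/2)) /
    ((μ + 7/2) ^ ((K : ℝ) * (7/2) + (n : ℝ)) * Real.Gamma ((K : ℝ) * (7/2)) *
      (n.factorial : ℝ))

/-- The `n`-th summand of the user blocking probability: `((n − T)/n)·P_K(n)` for
`n ≥ T + 1`, and `0` otherwise. -/
noncomputable def blockTerm (μ : ℝ) (K T : ℕ) (n : ℕ) : ℝ :=
  if T + 1 ≤ n then (((n : ℝ) - (T : ℝ)) / (n : ℝ)) * Puser μ K n else 0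

/-- The user blocking probability `P_b(K,T) = Σ_{n=T+1}^∞ ((n − T)/n)·P_K(n)`. -/
noncomputable def Pblock (μ : ℝ) (K T : ℕ) : ℝ := ∑' n : ℕ, blockTerm μ K T n

lemma Puser_pos {μ : ℝ} {K : ℕ} (hμ : 0 < μ) (hK : 0 < K) (n : ℕ) : 0 < Puser μ K n := by
  have hK' : (0:ℝ) < (K:ℝ) := by exact_mod_cast hK
  have hc : (0:ℝ) < (K:ℝ) * (7/2) := by positivity
  have h1 : 0 < Real.Gamma ((n:ℝ) + (K:ℝ) * (7/2)) := Real.Gamma_pos_of_pos (by positivity)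
  have h2 : 0 < Real.Gamma ((K:ℝ) * (7/2)) := Real.Gamma_pos_of_pos hc
  have hb : (0:ℝ) < μ + 7/2 := by linarith
  have h3 : 0 < (n.factorial : ℝ) := by exact_mod_cast n.factorial_pos
  unfold Puser
  positivity

lemma Puser_succ {μ : ℝ} {K : ℕ} (hμ : 0 < μ) (hK : 0 < K) (n : ℕ) :
    Puser μ K (n+1)
      = (μ / (μ + 7/2)) * (((n:ℝ) + (K:ℝ) * (7/2)) / ((n:ℝ) + 1)) * Puser μ K n := by
  have hK' : (0:ℝ) < (K:ℝ) := by exact_mod_cast hK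
  have hc : (0:ℝ) < (K:ℝ) * (7/2) := by positivity
  have hb : (0:ℝ) < μ + 7/2 := by linarith
  have h2 : 0 < Real.Gamma ((K:ℝ) * (7/2)) := Real.Gamma_pos_of_pos hc
  have h1 : 0 < Real.Gamma ((n:ℝ) + (K:ℝ) * (7/2)) := Real.Gamma_pos_of_pos (by positivity)
  have h3 : 0 < (n.factorial : ℝ) := by exact_mod_cast n.factorial_pos
  have hγ : Real.Gamma (((n+1:ℕ):ℝ) + (K:ℝ) * (7/2))
      = ((n:ℝ) + (K:ℝ) * (7/2)) * Real.Gamma ((n:ℝ) + (K:ℝ) * (7/2)) := by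
    push_cast
    rw [show (n:ℝ) + 1 + (K:ℝ) * (7/2) = ((n:ℝ) + (K:ℝ) * (7/2)) + 1 by ring,
      Real.Gamma_add_one (by positivity)]
  have hρ : (μ + 7/2) ^ ((K:ℝ) * (7/2) + ((n+1:ℕ):ℝ))
      = (μ + 7/2) ^ ((K:ℝ) * (7/2) + (n:ℝ)) * (μ + 7/2) := by
    push_cast
    rw [show (K:ℝ) * (7/2) + ((n:ℝ) + 1) = ((K:ℝ) * (7/2) + (n:ℝ)) + 1 by ring,
      Real.rpow_add_one hb.ne']
  have hρ' : (0:ℝ) < (μ + 7/2) ^ ((K:ℝ) * (7/2) + (n:ℝ)) := Real.rpow_pos_of_pos hb _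
  unfold Puser
  rw [hγ, hρ, Nat.factorial_succ]
  push_cast
  field_simp
  ring

set_option maxHeartbeats 2000000 in
/-- Proposition 2, logarithmic form:
`lim_{T→∞} (log P_b(K,T+1) − log P_b(K,T)) = log λ` with `λ = μ/(μ+b)`. -/
theorem Pblock_log_diff_tendsto (μ : ℝ) (hμ : 0 < μ) (K : ℕ) (hK : 0 < K) :
    Filter.Tendsto
      (fun T : ℕ => Real.log (Pblock μ K (T + 1)) - Real.log (Pblock μ K T))
      Filter.atTop (nhds (Real.log (μ / (μ + 7/2)))) := by
  have hK' : (1:ℝ) ≤ (K:ℝ) := by exact_mod_cast hK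
  set c : ℝ := (K:ℝ) * (7/2) with hc_def
  have hc : 0 < c := by rw [hc_def]; nlinarith
  have hc1 : 1 ≤ c := by rw [hc_def]; nlinarith
  have hb : (0:ℝ) < μ + 7/2 := by linarith
  set l : ℝ := μ / (μ + 7/2) with hl_def
  have hl : 0 < l := div_pos hμ hb
  have hl1 : l < 1 := (div_lt_one hb).2 (by linarith)
  have hpos : ∀ n, 0 < Puser μ K n := Puser_pos hμ hK
  have hsucc : ∀ n : ℕ, Puser μ K (n+1) = l * (((n:ℝ) + c) / ((n:ℝ) + 1)) * Puser μ K n :=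
    fun n => Puser_succ hμ hK n
  -- summability of `Puser μ K`
  have hPsum : Summable (Puser μ K) := by
    set r : ℝ := (1 + l)/2 with hr_def
    have hrl : l < r := by rw [hr_def]; linarith
    have hr1 : r < 1 := by rw [hr_def]; linarith
    refine summable_of_ratio_norm_eventually_le hr1 ?_
    obtain ⟨N, hN⟩ := exists_nat_gt ((l*c - r)/(r - l))
    filter_upwards [Filter.eventually_ge_atTop N] with n hn
    have hn' : ((l*c - r)/(r - l)) < (n:ℝ) :=
      lt_of_lt_of_le hN (by exact_mod_cast hn)
    have hrl' : 0 < r - l := by linarith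
    have h1 : (0:ℝ) < (n:ℝ) + 1 := by positivity
    rw [div_lt_iff₀ hrl'] at hn'
    have key : l * (((n:ℝ) + c) / ((n:ℝ) + 1)) ≤ r := by
      rw [mul_div_assoc', div_le_iff₀ h1]
      nlinarith
    rw [Real.norm_of_nonneg (hpos _).le, Real.norm_of_nonneg (hpos _).le, hsucc n]
    exact mul_le_mul_of_nonneg_right key (hpos n).le
  have hbt_nonneg : ∀ T n, 0 ≤ blockTerm μ K T n := by
    intro T n
    unfold blockTerm
    split_ifs with h
    · have hn : (T:ℝ) ≤ (n:ℝ) := by exact_mod_cast Nat.le_of_succ_le h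
      have hn0 : (0:ℝ) < (n:ℝ) := by
        have : 0 < n := by omega
        exact_mod_cast this
      exact mul_nonneg (div_nonneg (by linarith) hn0.le) (hpos n).le
    · exact le_refl 0
  have hbt_le : ∀ T n, blockTerm μ K T n ≤ Puser μ K n := by
    intro T n
    unfold blockTerm
    split_ifs with h
    · have hn0 : (0:ℝ) < (n:ℝ) := by
        have : 0 < n := by omega
        exact_mod_cast this
      have hT0 : (0:ℝ) ≤ (T:ℝ) := by positivity
      have : ((n:ℝ) - (T:ℝ)) / (n:ℝ) ≤ 1 := by
        rw [div_le_one hn0]; linarith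
      calc ((n:ℝ) - (T:ℝ)) / (n:ℝ) * Puser μ K n
          ≤ 1 * Puser μ K n := mul_le_mul_of_nonneg_right this (hpos n).le
        _ = Puser μ K n := one_mul _
    · exact (hpos n).le
  have hbsum : ∀ T, Summable (blockTerm μ K T) := fun T =>
    Summable.of_nonneg_of_le (hbt_nonneg T) (hbt_le T) hPsum
  set f : ℕ → ℕ → ℝ :=
    fun T m => (((m:ℝ) + 1) / ((T:ℝ) + (m:ℝ) + 1)) * Puser μ K (T + 1 + m) with hf_def
  have hf_eq : ∀ T m, blockTerm μ K T (T + 1 + m) = f T m := by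
    intro T m
    rw [hf_def]
    simp only [blockTerm, if_pos (by omega : T + 1 ≤ T + 1 + m)]
    push_cast
    ring_nf
  have hf_pos : ∀ T m, 0 < f T m := by
    intro T m
    rw [hf_def]
    have h1 : (0:ℝ) < (m:ℝ) + 1 := by positivity
    have h2 : (0:ℝ) < (T:ℝ) + (m:ℝ) + 1 := by positivity
    exact mul_pos (div_pos h1 h2) (hpos _)
  have hf_sum : ∀ T, Summable (f T) := by
    intro T
    have h := (summable_nat_add_iff (T+1)).2 (hbsum T)
    refine h.congr fun m => ?_
    rw [← hf_eq T m, add_comm m (T+1)]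
  have hP_eq : ∀ T, Pblock μ K T = ∑' m, f T m := by
    intro T
    have h0 : ∑ i ∈ Finset.range (T+1), blockTerm μ K T i = 0 := by
      apply Finset.sum_eq_zero
      intro i hi
      have hi' : ¬ (T + 1 ≤ i) := by
        simp only [Finset.mem_range] at hi; omega
      simp [blockTerm, hi']
    rw [Pblock, ← Summable.sum_add_tsum_nat_add (T+1) (hbsum T), h0, zero_add]
    exact tsum_congr fun m => by rw [add_comm m (T+1), hf_eq]
  have hPb_pos : ∀ T, 0 < Pblock μ K T := by
    intro T
    rw [hP_eq T]
    exact Summable.tsum_pos (hf_sum T) (fun m => (hf_pos T m).le) 0 (hf_pos T 0)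
  -- the one-step multiplicative relation
  have hstep : ∀ T m, f (T+1) m
      = l * ((((T:ℝ) + (m:ℝ) + 1) * (((T:ℝ) + (m:ℝ) + 1) + c)) / ((T:ℝ) + (m:ℝ) + 2)^2)
        * f T m := by
    intro T m
    have hn : (T + 1) + 1 + m = (T + 1 + m) + 1 := by omega
    rw [hf_def]
    simp only []
    rw [hn, hsucc (T + 1 + m)]
    have hx : (0:ℝ) < (T:ℝ) + (m:ℝ) + 1 := by positivity
    have hx2 : (0:ℝ) < (T:ℝ) + (m:ℝ) + 2 := by positivity
    push_cast
    field_simp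
    ring
  -- uniform bounds on the correction factor
  have hρlow : ∀ T m : ℕ, 1 - 1/((T:ℝ) + 2)
      ≤ (((T:ℝ) + (m:ℝ) + 1) * (((T:ℝ) + (m:ℝ) + 1) + c)) / ((T:ℝ) + (m:ℝ) + 2)^2 := by
    intro T m
    have hm : (0:ℝ) ≤ (m:ℝ) := by positivity
    have hT : (0:ℝ) ≤ (T:ℝ) := by positivity
    set x : ℝ := (T:ℝ) + (m:ℝ) + 1 with hx_def
    have hx : (0:ℝ) < x := by rw [hx_def]; positivity
    have hT2 : (0:ℝ) < (T:ℝ) + 2 := by positivity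
    have hx1 : (T:ℝ) + 1 ≤ x := by rw [hx_def]; linarith
    have heq : (1:ℝ) - 1/((T:ℝ) + 2) = ((T:ℝ) + 1)/((T:ℝ) + 2) := by
      field_simp
      ring
    rw [heq, show (T:ℝ) + (m:ℝ) + 2 = x + 1 by rw [hx_def]; ring,
      div_le_div_iff₀ hT2 (by positivity)]
    nlinarith [mul_nonneg hm hx.le, mul_nonneg (mul_nonneg hT hm) hx.le,
      mul_nonneg hm (mul_nonneg hm hx.le), mul_le_mul_of_nonneg_right hc1
        (mul_nonneg hT2.le hx.le), mul_nonneg (sub_nonneg.2 hx1) (by linarith : (0:ℝ) ≤ (T:ℝ)+1)]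
  have hρup : ∀ T m : ℕ,
      (((T:ℝ) + (m:ℝ) + 1) * (((T:ℝ) + (m:ℝ) + 1) + c)) / ((T:ℝ) + (m:ℝ) + 2)^2
        ≤ 1 + c/((T:ℝ) + 2) := by
    intro T m
    have hm : (0:ℝ) ≤ (m:ℝ) := by positivity
    have hT : (0:ℝ) ≤ (T:ℝ) := by positivity
    set x : ℝ := (T:ℝ) + (m:ℝ) + 1 with hx_def
    have hx : (0:ℝ) < x := by rw [hx_def]; positivity
    have hT2 : (0:ℝ) < (T:ℝ) + 2 := by positivity
    have hx1 : (T:ℝ) + 1 ≤ x := by rw [hx_def]; linarith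
    have heq : (1:ℝ) + c/((T:ℝ) + 2) = ((T:ℝ) + 2 + c)/((T:ℝ) + 2) := by
      field_simp
    rw [heq, show (T:ℝ) + (m:ℝ) + 2 = x + 1 by rw [hx_def]; ring,
      div_le_div_iff₀ (by positivity) hT2]
    nlinarith [mul_nonneg hc.le (mul_nonneg hx.le (sub_nonneg.2 hx1)),
      mul_nonneg hc.le hx.le, mul_nonneg hT2.le hx.le]
  -- bounds on Pblock (T+1) in terms of Pblock T
  have hlow : ∀ T : ℕ, l * (1 - 1/((T:ℝ) + 2)) * Pblock μ K T ≤ Pblock μ K (T+1) := by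
    intro T
    rw [hP_eq T, hP_eq (T+1), ← tsum_mul_left]
    refine Summable.tsum_le_tsum (fun m => ?_) ((hf_sum T).mul_left _) (hf_sum (T+1))
    rw [hstep T m]
    exact mul_le_mul_of_nonneg_right
      (mul_le_mul_of_nonneg_left (hρlow T m) hl.le) (hf_pos T m).le
  have hup : ∀ T : ℕ, Pblock μ K (T+1) ≤ l * (1 + c/((T:ℝ) + 2)) * Pblock μ K T := by
    intro T
    rw [hP_eq T, hP_eq (T+1), ← tsum_mul_left]
    refine Summable.tsum_le_tsum (fun m => ?_) (hf_sum (T+1)) ((hf_sum T).mul_left _)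
    rw [hstep T m]
    exact mul_le_mul_of_nonneg_right
      (mul_le_mul_of_nonneg_left (hρup T m) hl.le) (hf_pos T m).le
  -- the ratio tends to l
  have hratio : Filter.Tendsto (fun T : ℕ => Pblock μ K (T+1) / Pblock μ K T)
      Filter.atTop (nhds l) := by
    rw [← tendsto_sub_nhds_zero_iff]
    apply squeeze_zero_norm (a := fun T : ℕ => l * c / ((T:ℝ) + 2))
    · intro T
      have hPT := hPb_pos T
      have hT2 : (0:ℝ) < (T:ℝ) + 2 := by positivity
      have hlo : l * (1 - 1/((T:ℝ) + 2)) ≤ Pblock μ K (T+1) / Pblock μ K T :=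
        (le_div_iff₀ hPT).2 (hlow T)
      have hhi : Pblock μ K (T+1) / Pblock μ K T ≤ l * (1 + c/((T:ℝ) + 2)) :=
        (div_le_iff₀ hPT).2 (hup T)
      have hmono : l / ((T:ℝ) + 2) ≤ l * c / ((T:ℝ) + 2) := by
        gcongr
        exact le_mul_of_one_le_right hl.le hc1
      rw [Real.norm_eq_abs, abs_le]
      constructor
      · have hexp : l * (1 - 1/((T:ℝ) + 2)) = l - l/((T:ℝ) + 2) := by ring
        linarith
      · have hexp : l * (1 + c/((T:ℝ) + 2)) = l + l * c/((T:ℝ) + 2) := by ring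
        linarith
    · have h2 : Filter.Tendsto (fun T : ℕ => ((T:ℝ) + 2)) Filter.atTop Filter.atTop :=
        Filter.tendsto_atTop_add_const_right _ 2 tendsto_natCast_atTop_atTop
      exact Filter.Tendsto.div_atTop tendsto_const_nhds h2
  have heq : (fun T : ℕ => Real.log (Pblock μ K (T + 1)) - Real.log (Pblock μ K T))
      = fun T : ℕ => Real.log (Pblock μ K (T+1) / Pblock μ K T) := by
    funext T
    rw [Real.log_div (hPb_pos (T+1)).ne' (hPb_pos T).ne']
  rw [heq]
  exact ((Real.continuousAt_log hl.ne').tendsto).comp hratio
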